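/- arXiv:1104.4415 — 2 statements merged into one kernel-verified Lean document; each statement's English description precedes it below -/
import Mathlib

section
/- Let d ≥ 1, let G = (V, E) be a finite graph, let H = (V, F) be a maximal d-sparse subgraph of G, and let X₁, X₂, …, X_m be the vertex sets of the d-critical components of H. Then 𝒳 = {X₁, …, X_m} is a (d−1)-thin cover of G, and every (d−1)-hinge of 𝒳 is closed in H (it induces a complete subgraph of H). -/
open Finset
open scoped Classical

variable {α : Type*} [DecidableEq α]

/-- The set of edges of `E` with both endpoints in `X`. -/
noncomputable def inducedEdges (E : Finset (Sym2 α)) (X : Finset α) : Finset (Sym2 α) :=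
  E.filter fun e => ∀ v ∈ e, v ∈ X

/-- `i_G(X)`: the number of edges of `E` with both endpoints in `X`. -/
noncomputable def iG (E : Finset (Sym2 α)) (X : Finset α) : ℕ :=
  (inducedEdges E X).card

/-- `E` is a valid edge set on the vertex set `V`: edges are loopless and join vertices of `V`. -/
def ValidOn (V : Finset α) (E : Finset (Sym2 α)) : Prop :=
  ∀ e ∈ E, ¬ e.IsDiag ∧ ∀ v ∈ e, v ∈ V

/-- The graph `(V, E)` is `d`-sparse: every `X ⊆ V` with `|X| ≥ d` satisfies
`i(X) ≤ d|X| - (d+1 choose 2)`. -/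
noncomputable def Sparse (d : ℕ) (V : Finset α) (E : Finset (Sym2 α)) : Prop :=
  ∀ X ⊆ V, d ≤ X.card → iG E X + Nat.choose (d + 1) 2 ≤ d * X.card

/-- `(U, F)` is a subgraph of `(V, E)`. -/
def IsSubgraph (V : Finset α) (E : Finset (Sym2 α)) (U : Finset α) (F : Finset (Sym2 α)) :
    Prop :=
  U ⊆ V ∧ F ⊆ E ∧ ∀ e ∈ F, ∀ v ∈ e, v ∈ U

/-- The graph `(U, F)` is `d`-critical: either `|U| = 2` and `|F| = 1`, or `|U| ≥ d + 2` and
`|F| = d|U| - (d+1 choose 2)`. -/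
def Critical (d : ℕ) (U : Finset α) (F : Finset (Sym2 α)) : Prop :=
  (U.card = 2 ∧ F.card = 1) ∨
  (d + 2 ≤ U.card ∧ F.card + Nat.choose (d + 1) 2 = d * U.card)

/-- `(U, F)` is a `d`-critical subgraph of `(V, E)`. -/
def CritSubgraph (d : ℕ) (V : Finset α) (E : Finset (Sym2 α)) (U : Finset α)
    (F : Finset (Sym2 α)) : Prop :=
  IsSubgraph V E U F ∧ Critical d U F

/-- `(U, F)` is a `d`-critical component of `(V, E)`: a `d`-critical subgraph not properly
contained in any other `d`-critical subgraph. -/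
def CritComponent (d : ℕ) (V : Finset α) (E : Finset (Sym2 α)) (U : Finset α)
    (F : Finset (Sym2 α)) : Prop :=
  CritSubgraph d V E U F ∧
  ∀ U' F', CritSubgraph d V E U' F' → U ⊆ U' → F ⊆ F' → U = U' ∧ F = F'

/-- The `d`-critical cover of `(V, E)`: the family of vertex sets of its `d`-critical
components. -/
noncomputable def critCover (d : ℕ) (V : Finset α) (E : Finset (Sym2 α)) :
    Finset (Finset α) :=
  V.powerset.filter fun U => ∃ F, CritComponent d V E U F

/-- `d_𝒳(W)`: the number of members of the family `𝒳` containing `W`. -/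
def degX (𝒳 : Finset (Finset α)) (W : Finset α) : ℕ :=
  (𝒳.filter fun X => W ⊆ X).card

/-- `Θ_k(𝒳)`: the set of `k`-hinges of `𝒳`, i.e. `k`-element subsets of `V` lying in at least
two members of `𝒳`.  (For `k = 0` this is `{∅}` exactly when `|𝒳| ≥ 2`.) -/
noncomputable def theta (V : Finset α) (𝒳 : Finset (Finset α)) (k : ℕ) :
    Finset (Finset α) :=
  V.powerset.filter fun W => W.card = k ∧ 2 ≤ degX 𝒳 W

/-- `𝒳` is a cover of `(V, E)`: every member has at least two vertices and every edge is
induced by some member. -/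
def IsCover (E : Finset (Sym2 α)) (𝒳 : Finset (Finset α)) : Prop :=
  (∀ X ∈ 𝒳, 2 ≤ X.card) ∧ ∀ e ∈ E, ∃ X ∈ 𝒳, ∀ v ∈ e, v ∈ X

/-- `𝒳` is `t`-thin: any two distinct members intersect in at most `t` vertices. -/
def Thin (t : ℕ) (𝒳 : Finset (Finset α)) : Prop :=
  ∀ X ∈ 𝒳, ∀ Y ∈ 𝒳, X ≠ Y → (X ∩ Y).card ≤ t

/-- `(V, F)` is a maximal `d`-sparse (spanning) subgraph of `(V, E)`. -/
noncomputable def MaxSparse (d : ℕ) (V : Finset α) (E F : Finset (Sym2 α)) : Prop :=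
  F ⊆ E ∧ Sparse d V F ∧ ∀ e ∈ E, e ∉ F → ¬ Sparse d V (insert e F)

/-!
Call `X` tight if `i(X) = d|X| - binom(d+1, 2)`. In a `d`-sparse graph every critical component `X`
carries all edges it induces and is tight as soon as `|X| ≥ d`, and a tight set with at least
`d + 2` vertices that contains a component equals it. Supermodularity of `i` drives everything:
if two components met in at least `d` vertices, their union would be tight and large, hence equal
to both; if they meet in a `(d-1)`-hinge `W`, the union is not tight, and the resulting slack
forces `i(W) ≥ binom(d-1, 2)`, i.e. `W` is complete. An edge of `G` missing from `H` lies in a tight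
set of `H` by maximality; that set is critical unless it has `d` or `d + 1` vertices, where
tightness means completeness, which would put the edge in `H`.
-/

section InducedEdges

variable {E : Finset (Sym2 α)} {X Y : Finset α}

omit [DecidableEq α] in
lemma mem_inducedEdges {e : Sym2 α} : e ∈ inducedEdges E X ↔ e ∈ E ∧ ∀ v ∈ e, v ∈ X :=
  mem_filter

omit [DecidableEq α] in
lemma inducedEdges_mono (h : X ⊆ Y) : inducedEdges E X ⊆ inducedEdges E Y :=
  fun _ he => mem_inducedEdges.2
    ⟨(mem_inducedEdges.1 he).1, fun v hv => h ((mem_inducedEdges.1 he).2 v hv)⟩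

lemma inducedEdges_inter : inducedEdges E (X ∩ Y) = inducedEdges E X ∩ inducedEdges E Y := by
  ext e
  simp only [mem_inter, mem_inducedEdges, forall_and]
  tauto

lemma iG_add_iG_le_iG_union_add_iG_inter : iG E X + iG E Y ≤ iG E (X ∪ Y) + iG E (X ∩ Y) := by
  have hunion : inducedEdges E X ∪ inducedEdges E Y ⊆ inducedEdges E (X ∪ Y) :=
    union_subset (inducedEdges_mono subset_union_left) (inducedEdges_mono subset_union_right)
  have := card_le_card hunion
  have := card_union_add_card_inter (inducedEdges E X) (inducedEdges E Y)
  rw [← inducedEdges_inter] at this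
  unfold iG
  omega

lemma iG_insert_le (e : Sym2 α) : iG (insert e E) X ≤ iG E X + 1 := by
  unfold iG inducedEdges
  rw [filter_insert]
  split_ifs
  exacts [card_insert_le _ _, Nat.le_succ _]

lemma mem_image_offDiag {e : Sym2 α} (he : ¬ e.IsDiag) (heX : ∀ v ∈ e, v ∈ X) :
    e ∈ X.offDiag.image Sym2.mk.uncurry := by
  induction e using Sym2.ind with
  | _ u v =>
    exact mem_image.2 ⟨(u, v), mem_offDiag.2 ⟨heX u (Sym2.mem_mk_left u v),
      heX v (Sym2.mem_mk_right u v), fun h => he (Sym2.mk_isDiag_iff.2 h)⟩, rfl⟩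

lemma inducedEdges_subset_image_offDiag (hE : ∀ e ∈ E, ¬ e.IsDiag) :
    inducedEdges E X ⊆ X.offDiag.image Sym2.mk.uncurry :=
  fun e he => mem_image_offDiag (hE e (mem_inducedEdges.1 he).1) (mem_inducedEdges.1 he).2

lemma iG_le_choose_two (hE : ∀ e ∈ E, ¬ e.IsDiag) : iG E X ≤ X.card.choose 2 :=
  Sym2.card_image_offDiag X ▸ card_le_card (inducedEdges_subset_image_offDiag hE)

lemma mem_of_choose_two_le_iG (hE : ∀ e ∈ E, ¬ e.IsDiag) (h : X.card.choose 2 ≤ iG E X)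
    {e : Sym2 α} (he : ¬ e.IsDiag) (heX : ∀ v ∈ e, v ∈ X) : e ∈ E := by
  have hall := eq_of_subset_of_card_le (inducedEdges_subset_image_offDiag hE)
    (Sym2.card_image_offDiag X ▸ h)
  exact (mem_inducedEdges.1 (hall ▸ mem_image_offDiag he heX)).1

end InducedEdges

-- Supermodularity of `i` pushes the slack of `X ∪ Y` down to `X ∩ Y`.
lemma mul_card_inter_lt_iG_inter_add_choose {E : Finset (Sym2 α)} {X Y : Finset α} {d c : ℕ}
    (hX : iG E X + c = d * X.card) (hY : iG E Y + c = d * Y.card)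
    (hXY : iG E (X ∪ Y) + c < d * (X ∪ Y).card) : d * (X ∩ Y).card < iG E (X ∩ Y) + c := by
  have hsup := iG_add_iG_le_iG_union_add_iG_inter (E := E) (X := X) (Y := Y)
  have hcard := congrArg (d * ·) (card_union_add_card_inter X Y)
  simp only [mul_add] at hcard
  omega

lemma choose_two_add_choose_two_of_le {d n : ℕ} (h1 : d ≤ n) (h2 : n ≤ d + 1) :
    n.choose 2 + (d + 1).choose 2 = d * n := by
  obtain rfl | rfl : n = d ∨ n = d + 1 := by omega
  all_goals qify; simp only [Nat.cast_choose_two]; push_cast; ring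

lemma choose_two_pred_add_choose_two_succ {d : ℕ} (hd : 1 ≤ d) :
    (d - 1).choose 2 + (d + 1).choose 2 = d * (d - 1) + 1 := by
  qify [hd]
  simp only [Nat.cast_choose_two, Nat.cast_sub hd]
  push_cast
  ring

section Components

variable {d : ℕ} {V : Finset α} {F : Finset (Sym2 α)} {X Y : Finset α} {FX FY : Finset (Sym2 α)}

lemma CritSubgraph.exists_critComponent (h : CritSubgraph d V F X FX) :
    ∃ Y FY, CritComponent d V F Y FY ∧ X ⊆ Y ∧ FX ⊆ FY := by
  set S := (V.powerset ×ˢ F.powerset).filter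
    fun p => CritSubgraph d V F p.1 p.2 ∧ X ⊆ p.1 ∧ FX ⊆ p.2 with hS
  have hXS : (X, FX) ∈ S := by
    simp only [hS, mem_filter, mem_product, mem_powerset]
    exact ⟨⟨h.1.1, h.1.2.1⟩, h, subset_rfl, subset_rfl⟩
  obtain ⟨⟨Y, FY⟩, hY, hmax⟩ := S.exists_max_image (fun p => p.1.card + p.2.card) ⟨_, hXS⟩
  simp only [hS, mem_filter, mem_product, mem_powerset] at hY
  obtain ⟨-, hcrit, hXY, hFXY⟩ := hY
  refine ⟨Y, FY, ⟨hcrit, fun Z FZ hZ hYZ hFYZ => ?_⟩, hXY, hFXY⟩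
  have hZS : (Z, FZ) ∈ S := by
    simp only [hS, mem_filter, mem_product, mem_powerset]
    exact ⟨⟨hZ.1.1, hZ.1.2.1⟩, hZ, hXY.trans hYZ, hFXY.trans hFYZ⟩
  have : Z.card + FZ.card ≤ Y.card + FY.card := hmax _ hZS
  have := card_le_card hYZ
  have := card_le_card hFYZ
  exact ⟨eq_of_subset_of_card_le hYZ (by omega), eq_of_subset_of_card_le hFYZ (by omega)⟩

lemma critSubgraph_edge {e : Sym2 α} (he : ¬ e.IsDiag) (heV : ∀ v ∈ e, v ∈ V) (heF : e ∈ F) :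
    CritSubgraph d V F e.toFinset {e} := by
  refine ⟨⟨fun v hv => heV v (Sym2.mem_toFinset.1 hv), singleton_subset_iff.2 heF, ?_⟩,
    Or.inl ⟨Sym2.card_toFinset_of_not_isDiag e he, card_singleton e⟩⟩
  intro e' he' v hv
  rw [mem_singleton.1 he'] at hv
  exact Sym2.mem_toFinset.2 hv

omit [DecidableEq α] in
lemma critSubgraph_inducedEdges (hX : X ⊆ V) (hcard : d + 2 ≤ X.card)
    (htight : iG F X + (d + 1).choose 2 = d * X.card) :
    CritSubgraph d V F X (inducedEdges F X) :=
  ⟨⟨hX, filter_subset _ _, fun _ he => (mem_inducedEdges.1 he).2⟩, Or.inr ⟨hcard, htight⟩⟩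

omit [DecidableEq α] in
lemma CritSubgraph.subset_inducedEdges (h : CritSubgraph d V F X FX) (hXY : X ⊆ Y) :
    FX ⊆ inducedEdges F Y :=
  fun e he => mem_inducedEdges.2 ⟨h.1.2.1 he, fun v hv => hXY (h.1.2.2 e he v hv)⟩

omit [DecidableEq α] in
lemma mem_critCover : X ∈ critCover d V F ↔ X ⊆ V ∧ ∃ FX, CritComponent d V F X FX := by
  simp [critCover]

lemma CritSubgraph.exists_mem_critCover (h : CritSubgraph d V F X FX) :
    ∃ Y ∈ critCover d V F, X ⊆ Y := by
  obtain ⟨Y, FY, hY, hXY, -⟩ := h.exists_critComponent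
  exact ⟨Y, mem_critCover.2 ⟨hY.1.1.1, FY, hY⟩, hXY⟩

lemma exists_tight_of_not_sparse_insert (hsp : Sparse d V F) {e : Sym2 α}
    (hns : ¬ Sparse d V (insert e F)) :
    ∃ X ⊆ V, d ≤ X.card ∧ (∀ v ∈ e, v ∈ X) ∧ iG F X + (d + 1).choose 2 = d * X.card := by
  simp only [Sparse, not_forall, not_le] at hns
  obtain ⟨X, hXV, hdX, hlt⟩ := hns
  have := hsp X hXV hdX
  have := iG_insert_le (E := F) (X := X) e
  refine ⟨X, hXV, hdX, ?_, by omega⟩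
  by_contra heX
  have : iG (insert e F) X = iG F X := by
    unfold iG inducedEdges
    rw [filter_insert, if_neg heX]
  omega

lemma critCover_isCover (hval : ValidOn V E) (hmax : MaxSparse d V E F) :
    IsCover E (critCover d V F) := by
  obtain ⟨hFE, hsp, hmaxF⟩ := hmax
  refine ⟨fun X hX => ?_, fun e heE => ?_⟩
  · obtain ⟨-, FX, hc⟩ := mem_critCover.1 hX
    rcases hc.1.2 with ⟨h, -⟩ | ⟨h, -⟩ <;> omega
  by_cases heF : e ∈ F
  · obtain ⟨Y, hY, heY⟩ :=
      (critSubgraph_edge (hval e heE).1 (hval e heE).2 heF).exists_mem_critCover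
    exact ⟨Y, hY, fun v hv => heY (Sym2.mem_toFinset.2 hv)⟩
  obtain ⟨X, hXV, hdX, heX, htight⟩ := exists_tight_of_not_sparse_insert hsp (hmaxF e heE heF)
  by_cases hcard : d + 2 ≤ X.card
  · obtain ⟨Y, hY, hXY⟩ := (critSubgraph_inducedEdges hXV hcard htight).exists_mem_critCover
    exact ⟨Y, hY, fun v hv => hXY (heX v hv)⟩
  have := choose_two_add_choose_two_of_le hdX (by omega : X.card ≤ d + 1)
  exact absurd (mem_of_choose_two_le_iG (fun e he => (hval e (hFE he)).1) (by omega)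
    (hval e heE).1 heX) heF

omit [DecidableEq α] in
lemma CritComponent.eq_of_subset_of_tight (hX : CritComponent d V F X FX) {Z : Finset α}
    (hZ : Z ⊆ V) (hXZ : X ⊆ Z) (hcard : d + 2 ≤ Z.card)
    (htight : iG F Z + (d + 1).choose 2 = d * Z.card) : X = Z :=
  (hX.2 Z _ (critSubgraph_inducedEdges hZ hcard htight) hXZ (hX.1.subset_inducedEdges hXZ)).1

variable (hF : ∀ e ∈ F, ¬ e.IsDiag) (hsp : Sparse d V F)
include hF hsp

-- `(X, inducedEdges F X)` is itself critical, so maximality forces equality.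
lemma CritComponent.eq_inducedEdges (hc : CritComponent d V F X FX) : FX = inducedEdges F X := by
  have hsub := hc.1.subset_inducedEdges subset_rfl
  refine eq_of_subset_of_card_le hsub ?_
  rcases hc.1.2 with ⟨hX2, hF1⟩ | ⟨hXd, hFX⟩
  · have := iG_le_choose_two (X := X) hF
    rw [hX2] at this
    exact hF1 ▸ this
  · have := hsp X hc.1.1.1 (by omega)
    unfold iG at this
    omega

lemma CritComponent.iG_add_choose_eq (hd : 1 ≤ d) (hc : CritComponent d V F X FX)
    (hX : d ≤ X.card) : iG F X + (d + 1).choose 2 = d * X.card := by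
  rw [iG, ← hc.eq_inducedEdges hF hsp]
  rcases hc.1.2 with ⟨hX2, hF1⟩ | ⟨-, hFX⟩
  · rw [hF1, hX2]
    obtain rfl | rfl : d = 1 ∨ d = 2 := by omega
    all_goals rfl
  · exact hFX

lemma CritComponent.mem_of_card_eq_two (hd : 1 ≤ d) (hc : CritComponent d V F X FX)
    (hX2 : X.card = 2) {e : Sym2 α} (he : ¬ e.IsDiag) (heX : ∀ v ∈ e, v ∈ X) : e ∈ F := by
  refine mem_of_choose_two_le_iG hF ?_ he heX
  rcases hc.1.2 with ⟨-, hF1⟩ | ⟨hXd, -⟩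
  · rw [iG, ← hc.eq_inducedEdges hF hsp, hF1, hX2]; rfl
  · omega

lemma CritComponent.eq_of_subset (hX : CritComponent d V F X FX) (hY : CritComponent d V F Y FY)
    (hXY : X ⊆ Y) : X = Y :=
  (hX.2 Y FY hY.1 hXY (hY.eq_inducedEdges hF hsp ▸ hX.1.subset_inducedEdges hXY)).1

omit hF in
lemma iG_union_add_choose_lt (hX : CritComponent d V F X FX) (hY : CritComponent d V F Y FY)
    (hXY : X ≠ Y) (hcard : d + 2 ≤ (X ∪ Y).card) :
    iG F (X ∪ Y) + (d + 1).choose 2 < d * (X ∪ Y).card := by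
  have hZV := union_subset hX.1.1.1 hY.1.1.1
  refine lt_of_le_of_ne (hsp _ hZV (by omega)) fun htight => hXY ?_
  exact (hX.eq_of_subset_of_tight hZV subset_union_left hcard htight).trans
    (hY.eq_of_subset_of_tight hZV subset_union_right hcard htight).symm

lemma critCover_thin (hd : 1 ≤ d) : Thin (d - 1) (critCover d V F) := by
  intro X hX Y hY hXY
  by_contra! hinter
  obtain ⟨-, FX, hcX⟩ := mem_critCover.1 hX
  obtain ⟨-, FY, hcY⟩ := mem_critCover.1 hY
  have hltX : (X ∩ Y).card < X.card := card_lt_card <| ssubset_of_subset_of_ne inter_subset_left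
    fun h => hXY (hcX.eq_of_subset hF hsp hcY (inter_eq_left.1 h))
  have hltY : (X ∩ Y).card < Y.card := card_lt_card <| ssubset_of_subset_of_ne inter_subset_right
    fun h => hXY (hcY.eq_of_subset hF hsp hcX (inter_eq_right.1 h)).symm
  have := card_union_add_card_inter X Y
  have hsparse := hsp (X ∩ Y) (inter_subset_left.trans hcX.1.1.1) (by omega)
  have := mul_card_inter_lt_iG_inter_add_choose
    (hcX.iG_add_choose_eq hF hsp hd (by omega)) (hcY.iG_add_choose_eq hF hsp hd (by omega))
    (iG_union_add_choose_lt hsp hcX hcY hXY (by omega))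
  omega

lemma mem_of_mem_theta (hd : 1 ≤ d) {W : Finset α} (hW : W ∈ theta V (critCover d V F) (d - 1))
    {e : Sym2 α} (he : ¬ e.IsDiag) (heW : ∀ v ∈ e, v ∈ W) : e ∈ F := by
  rw [theta, mem_filter] at hW
  obtain ⟨-, hWcard, hdeg⟩ := hW
  obtain ⟨X, hXW, Y, hYW, hXY⟩ := one_lt_card.1 hdeg
  rw [mem_filter] at hXW hYW
  obtain ⟨-, FX, hcX⟩ := mem_critCover.1 hXW.1
  obtain ⟨-, FY, hcY⟩ := mem_critCover.1 hYW.1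
  have hWXY : W = X ∩ Y := eq_of_subset_of_card_le (subset_inter hXW.2 hYW.2)
    (hWcard ▸ critCover_thin hF hsp hd X hXW.1 Y hYW.1 hXY)
  rcases hcX.1.2 with ⟨hX2, -⟩ | ⟨hXcard, -⟩
  · exact hcX.mem_of_card_eq_two hF hsp hd hX2 he fun v hv => hXW.2 (heW v hv)
  rcases hcY.1.2 with ⟨hY2, -⟩ | ⟨hYcard, -⟩
  · exact hcY.mem_of_card_eq_two hF hsp hd hY2 he fun v hv => hYW.2 (heW v hv)
  have hlt := mul_card_inter_lt_iG_inter_add_choose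
    (hcX.iG_add_choose_eq hF hsp hd (by omega)) (hcY.iG_add_choose_eq hF hsp hd (by omega))
    (iG_union_add_choose_lt hsp hcX hcY hXY (hXcard.trans (card_le_card subset_union_left)))
  rw [← hWXY, hWcard] at hlt
  have := choose_two_pred_add_choose_two_succ hd
  exact mem_of_choose_two_le_iG hF (by rw [hWcard]; omega) he heW

end Components

/-- If `H = (V, F)` is a maximal `d`-sparse subgraph of `G = (V, E)`, then the
family of vertex sets of the `d`-critical components of `H` is a `(d-1)`-thin cover of `G`
and every `(d-1)`-hinge of this cover induces a complete subgraph of `H`. -/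
theorem stmt2 (d : ℕ) (hd : 1 ≤ d) (V : Finset α) (E F : Finset (Sym2 α))
    (hval : ValidOn V E) (hmax : MaxSparse d V E F)
    (𝒳 : Finset (Finset α)) (h𝒳 : 𝒳 = critCover d V F) :
    IsCover E 𝒳 ∧ Thin (d - 1) 𝒳 ∧
      ∀ W ∈ theta V 𝒳 (d - 1), ∀ u ∈ W, ∀ v ∈ W, u ≠ v → s(u, v) ∈ F := by
  subst h𝒳
  have hF : ∀ e ∈ F, ¬ e.IsDiag := fun e he => (hval e (hmax.1 he)).1
  refine ⟨critCover_isCover hval hmax, critCover_thin hF hmax.2.1 hd, ?_⟩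
  intro W hW u hu v hv huv
  refine mem_of_mem_theta hF hmax.2.1 hd hW (Sym2.mk_isDiag_iff.not.2 huv) fun w hw => ?_
  rcases Sym2.mem_iff.1 hw with rfl | rfl <;> assumption
end

section
/- Let d ≥ 2, let H = (V, E) be a d-sparse finite graph with d-critical cover 𝒳 satisfying |𝒳| ≥ 2, and suppose every d-critical component of H has at least d + 2 vertices. Put a_j = Σ_{U ∈ Θ_j(𝒳)} (d_𝒳(U) − 1) for 0 ≤ j ≤ d. Then for every 0 ≤ k ≤ d − 2 we have d(d − k) a_{k+1} < (k + 2)(d − k − 1) binom(d+1, k+2) · (|𝒳| − 1). -/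
open Finset
open scoped Classical

variable {α : Type*} [DecidableEq α]

/-!
For a set `W` of vertices, double count the incidences between the members of `𝒳` containing `W`
and the vertices and edges they span: every member `X` is tight, `i(X) + C(d+1,2) = d|X|`, and
sparsity of the union of these members yields
`d · Σ_v (d_𝒳(W + v) - 1) ≤ C(d+1,2) (d_𝒳(W) - 1) + Σ_e (d_𝒳(W ∪ e) - 1)`,
strictly for `W = ∅`: the union of all members contains two distinct maximal tight sets, so it is
not tight.
Truncated at `0`, `d_𝒳(U) - 1` vanishes off the hinges, so `a_j` is its sum over all `j`-sets.
Summing over the `j`-sets `W` and counting each edge as two ordered pairs of vertices gives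
`2(j+1)(d-j) a_{j+1} ≤ (d-j)(d-j+1) a_j + (j+1)(j+2) a_{j+2}`, with `a_0 = |𝒳| - 1` and
`a_d = 0` because two members share fewer than `d` vertices. The weights
`T_j = (d-j) C(d+1,j)` satisfy this with equality, so downward induction gives
`T_j a_{j+1} ≤ T_{j+1} a_j`, and the strict inequality at `j = 0` then propagates to
`d a_j < T_j a_0`.
-/

section LayerSums

variable {M : Type*} [AddCommMonoid M]

def layerSum (V : Finset α) (f : Finset α → M) (j : ℕ) : M :=
  ∑ U ∈ V.powersetCard j, f U

theorem sum_powersetCard_sum_sdiff_insert (V : Finset α) (f : Finset α → M) (j : ℕ) :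
    ∑ W ∈ V.powersetCard j, ∑ v ∈ V \ W, f (insert v W) = (j + 1) • layerSum V f (j + 1) := by
  have hcard : ∀ U ∈ V.powersetCard (j + 1), (j + 1) • f U = ∑ _v ∈ U, f U := by
    intro U hU
    rw [sum_const, (mem_powersetCard.1 hU).2]
  rw [layerSum, smul_sum, sum_congr rfl hcard, sum_sigma', sum_sigma']
  refine sum_bij' (fun p _ => ⟨insert p.2 p.1, p.2⟩) (fun p _ => ⟨p.1.erase p.2, p.2⟩)
    ?_ ?_ ?_ ?_ ?_
  · rintro ⟨W, v⟩ h
    simp only [mem_sigma, mem_powersetCard, mem_sdiff] at h ⊢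
    exact ⟨⟨insert_subset h.2.1 h.1.1, by rw [card_insert_of_notMem h.2.2, h.1.2]⟩,
      mem_insert_self _ _⟩
  · rintro ⟨U, v⟩ h
    simp only [mem_sigma, mem_powersetCard, mem_sdiff] at h ⊢
    exact ⟨⟨(erase_subset _ _).trans h.1.1, by rw [card_erase_of_mem h.2, h.1.2]; rfl⟩,
      h.1.1 h.2, notMem_erase _ _⟩
  · rintro ⟨W, v⟩ h
    simp only [mem_sigma, mem_sdiff] at h
    simp [erase_insert h.2.2]
  · rintro ⟨U, v⟩ h
    simp [insert_erase (mem_sigma.1 h).2]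
  · intro _ _
    rfl

theorem sum_powersetCard_sum_insert (V : Finset α) (f : Finset α → M) (j : ℕ) :
    ∑ W ∈ V.powersetCard j, ∑ v ∈ V, f (insert v W) =
      j • layerSum V f j + (j + 1) • layerSum V f (j + 1) := by
  rw [← sum_powersetCard_sum_sdiff_insert, layerSum, smul_sum, ← sum_add_distrib]
  refine sum_congr rfl fun W hW => ?_
  obtain ⟨hWV, hWj⟩ := mem_powersetCard.1 hW
  rw [← sum_sdiff hWV, add_comm, sum_congr rfl fun v hv => by rw [insert_eq_of_mem hv],
    sum_const, hWj]

end LayerSums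

theorem ValidOn.two_mul_sum_add_sum_diag_le {V : Finset α} {E : Finset (Sym2 α)}
    (hval : ValidOn V E) (g : Sym2 α → ℕ) :
    2 * ∑ e ∈ E, g e + ∑ v ∈ V, g s(v, v) ≤ ∑ v ∈ V, ∑ w ∈ V, g s(v, w) := by
  have hfiber : ∀ e ∈ E, #{p ∈ V.offDiag | s(p.1, p.2) = e} = 2 := by
    intro e he
    obtain ⟨hdiag, hV⟩ := hval e he
    induction e using Sym2.ind with
    | _ a b =>
      have hab : a ≠ b := fun h => hdiag (Sym2.mk_isDiag_iff.2 h)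
      have : {p ∈ V.offDiag | s(p.1, p.2) = s(a, b)} = {(a, b), (b, a)} := by
        ext ⟨x, y⟩
        simp only [mem_filter, mem_offDiag, mem_insert, mem_singleton, Sym2.eq_iff,
          Prod.mk.injEq]
        constructor
        · rintro ⟨-, h⟩
          exact h
        · rintro (⟨rfl, rfl⟩ | ⟨rfl, rfl⟩)
          · exact ⟨⟨hV _ (Sym2.mem_mk_left _ _), hV _ (Sym2.mem_mk_right _ _), hab⟩, by simp⟩
          · exact ⟨⟨hV _ (Sym2.mem_mk_right _ _), hV _ (Sym2.mem_mk_left _ _), hab.symm⟩, by simp⟩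
      rw [this, card_pair (by simp [hab])]
  have hedges : 2 * ∑ e ∈ E, g e ≤ ∑ p ∈ V.offDiag, g s(p.1, p.2) :=
    calc 2 * ∑ e ∈ E, g e
        = ∑ e ∈ E, ∑ p ∈ V.offDiag with s(p.1, p.2) = e, g e := by
          rw [mul_sum]
          exact sum_congr rfl fun e he => by rw [sum_const, hfiber e he, smul_eq_mul]
      _ = ∑ p ∈ V.offDiag with s(p.1, p.2) ∈ E, g s(p.1, p.2) :=
          sum_fiberwise_eq_sum_filter' _ _ _ _
      _ ≤ ∑ p ∈ V.offDiag, g s(p.1, p.2) := sum_le_sum_of_subset (filter_subset _ _)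
  rw [← sum_product' (f := fun v w => g s(v, w)), ← diag_union_offDiag,
    sum_union (disjoint_diag_offDiag _), sum_diag]
  simp only at hedges ⊢
  omega

theorem ValidOn.mul_layerSum_succ_add_le {V : Finset α} {E : Finset (Sym2 α)}
    (hval : ValidOn V E) (f : Finset α → ℕ) {d j s : ℕ}
    (hf : ∀ W ∈ V.powersetCard j, d * ∑ v ∈ V, f (insert v W) + s ≤
      (d + 1).choose 2 * f W + ∑ e ∈ E, f (e.toFinset ∪ W)) :
    2 * (j + 1) * ((d : ℤ) - j) * layerSum V f (j + 1) + 2 * s * #(V.powersetCard j) ≤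
      ((d : ℤ) - j) * ((d : ℤ) - j + 1) * layerSum V f j +
        (j + 1) * (j + 2) * layerSum V f (j + 2) := by
  have hvert := sum_powersetCard_sum_insert V f j
  have hpairs : ∑ W ∈ V.powersetCard j, ∑ v ∈ V, ∑ w ∈ V, f (insert v (insert w W)) =
      j * (j * layerSum V f j + (j + 1) * layerSum V f (j + 1)) +
        (j + 1) * ((j + 1) * layerSum V f (j + 1) + (j + 2) * layerSum V f (j + 2)) := by
    calc ∑ W ∈ V.powersetCard j, ∑ v ∈ V, ∑ w ∈ V, f (insert v (insert w W))
        = ∑ W ∈ V.powersetCard j, ∑ w ∈ V, ∑ v ∈ V, f (insert v (insert w W)) :=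
          sum_congr rfl fun _ _ => sum_comm
      _ = _ := by
          rw [sum_powersetCard_sum_insert V (fun U => ∑ v ∈ V, f (insert v U)), layerSum,
            layerSum, sum_powersetCard_sum_insert, sum_powersetCard_sum_insert]
          simp only [smul_eq_mul]
  have hedges : ∀ W ∈ V.powersetCard j, 2 * ∑ e ∈ E, f (e.toFinset ∪ W) +
      ∑ v ∈ V, f (insert v W) ≤ ∑ v ∈ V, ∑ w ∈ V, f (insert v (insert w W)) := fun W _ => by
    simpa [Sym2.toFinset_mk_eq, insert_union] using
      hval.two_mul_sum_add_sum_diag_le (fun e => f (e.toFinset ∪ W))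
  have hsum := sum_le_sum hf
  have hsumE := sum_le_sum hedges
  rw [sum_add_distrib, ← mul_sum, sum_const, smul_eq_mul, sum_add_distrib, ← mul_sum] at hsum
  rw [sum_add_distrib, ← mul_sum, hpairs] at hsumE
  rw [hvert, smul_eq_mul, smul_eq_mul] at hsum hsumE
  have hC : (d + 1).choose 2 * 2 = (d + 1) * d := by
    simpa using Nat.choose_succ_right_eq (d + 1) 1
  rw [← layerSum] at hsum
  zify at hsum hsumE hC
  linear_combination 2 * hsum + hsumE + ((layerSum V f j : ℕ) : ℤ) * hC

def chainWeight (d j : ℕ) : ℤ := ((d : ℤ) - j) * (d + 1).choose j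

section ChainWeight

variable {d j : ℕ}

theorem chainWeight_nonneg (h : j ≤ d) : 0 ≤ chainWeight d j :=
  mul_nonneg (by omega) (Nat.cast_nonneg _)

theorem chainWeight_pos (h : j < d) : 0 < chainWeight d j :=
  mul_pos (by omega) (Nat.cast_pos.2 (Nat.choose_pos (by omega)))

theorem chainWeight_zero : chainWeight d 0 = d := by
  simp [chainWeight]

theorem chainWeight_self : chainWeight d d = 0 := by
  simp [chainWeight]

theorem cast_choose_succ_mul (hj : j ≤ d) :
    ((d + 1).choose (j + 1) : ℤ) * (j + 1) = (d + 1).choose j * ((d : ℤ) + 1 - j) := by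
  have := congrArg (Nat.cast (R := ℤ)) (Nat.choose_succ_right_eq (d + 1) j)
  push_cast [Nat.cast_sub (show j ≤ d + 1 by omega)] at this
  exact this

theorem chainWeight_recurrence (hj : j + 1 ≤ d) :
    2 * (j + 1) * ((d : ℤ) - j) * chainWeight d (j + 1) =
      ((d : ℤ) - j) * ((d : ℤ) - j + 1) * chainWeight d j +
        (j + 1) * (j + 2) * chainWeight d (j + 2) := by
  have h1 := cast_choose_succ_mul (d := d) (j := j) (by omega)
  have h2 := cast_choose_succ_mul (d := d) (j := j + 1) hj
  unfold chainWeight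
  push_cast at h1 h2 ⊢
  linear_combination ((d : ℤ) - j) ^ 2 * h1 - (j + 1) * ((d : ℤ) - j - 2) * h2

theorem chainWeight_step (hj : j + 1 ≤ d) {x y z s : ℤ}
    (hI : 2 * (j + 1) * ((d : ℤ) - j) * y + s ≤
      ((d : ℤ) - j) * ((d : ℤ) - j + 1) * x + (j + 1) * (j + 2) * z)
    (hz : chainWeight d (j + 1) * z ≤ chainWeight d (j + 2) * y) :
    ((d : ℤ) - j) * ((d : ℤ) - j + 1) * (chainWeight d j * y) + chainWeight d (j + 1) * s ≤
      ((d : ℤ) - j) * ((d : ℤ) - j + 1) * (chainWeight d (j + 1) * x) := by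
  have h1 := mul_le_mul_of_nonneg_left hI (chainWeight_nonneg hj)
  have h2 := mul_le_mul_of_nonneg_left hz (by positivity : (0 : ℤ) ≤ (j + 1) * (j + 2))
  linear_combination h1 + h2 - y * chainWeight_recurrence hj

theorem sub_mul_chainWeight_succ {k : ℕ} (hk : k + 1 ≤ d) :
    ((d : ℤ) - k) * chainWeight d (k + 1) =
      ((k : ℤ) + 2) * ((d : ℤ) - k - 1) * (d + 1).choose (k + 2) := by
  have := cast_choose_succ_mul (d := d) (j := k + 1) hk
  unfold chainWeight
  push_cast at this ⊢
  linear_combination (-((d : ℤ) - k - 1)) * this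

end ChainWeight

section Sequence

variable {d : ℕ} {a : ℕ → ℤ}

theorem chainWeight_mul_le_mul (htop : a d = 0)
    (hI : ∀ j, 1 ≤ j → j + 2 ≤ d → 2 * (j + 1) * ((d : ℤ) - j) * a (j + 1) ≤
      ((d : ℤ) - j) * ((d : ℤ) - j + 1) * a j + (j + 1) * (j + 2) * a (j + 2))
    {j : ℕ} (hj : 1 ≤ j) (hjd : j < d) :
    chainWeight d j * a (j + 1) ≤ chainWeight d (j + 1) * a j := by
  obtain ⟨n, hn⟩ := Nat.exists_eq_add_of_lt hjd
  induction n generalizing j with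
  | zero =>
    subst hn
    simp [htop, chainWeight_self]
  | succ n ih =>
    have hstep := chainWeight_step (d := d) (j := j) (s := 0) (by omega)
      (by simpa using hI j hj (by omega)) (ih (j := j + 1) (by omega) (by omega) (by omega))
    have hc : (0 : ℤ) < ((d : ℤ) - j) * ((d : ℤ) - j + 1) := by
      have : (j : ℤ) < d := by exact_mod_cast hjd
      positivity
    simpa using le_of_mul_le_mul_left (by simpa using hstep) hc

theorem mul_lt_chainWeight_mul (htop : a d = 0)
    (hI : ∀ j, 1 ≤ j → j + 2 ≤ d → 2 * (j + 1) * ((d : ℤ) - j) * a (j + 1) ≤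
      ((d : ℤ) - j) * ((d : ℤ) - j + 1) * a j + (j + 1) * (j + 2) * a (j + 2))
    (h0 : 2 * d * a 1 < d * (d + 1) * a 0 + 2 * a 2) {j : ℕ} (hj : 1 ≤ j) (hjd : j < d) :
    d * a j < chainWeight d j * a 0 := by
  induction j, hj using Nat.le_induction with
  | base =>
    have hstep := chainWeight_step (d := d) (j := 0) (x := a 0) (s := 1) (by omega)
      (by push_cast; linarith) (chainWeight_mul_le_mul htop hI le_rfl hjd)
    have hc : (0 : ℤ) < d * (d + 1) := by
      have : (0 : ℤ) < d := by exact_mod_cast (show 0 < d by omega)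
      positivity
    have hT := chainWeight_pos (show 1 < d by omega)
    simp only [CharP.cast_eq_zero, sub_zero, chainWeight_zero, zero_add] at hstep
    exact lt_of_mul_lt_mul_left (by linarith) hc.le
  | succ j hj ih =>
    have hratio := chainWeight_mul_le_mul htop hI hj (by omega)
    have hTj := chainWeight_pos (show j < d by omega)
    have hTj1 := chainWeight_pos hjd
    have := mul_lt_mul_of_pos_left (ih (by omega)) hTj1
    refine lt_of_mul_lt_mul_left (a := chainWeight d j) ?_ hTj.le
    calc chainWeight d j * (d * a (j + 1))
        = d * (chainWeight d j * a (j + 1)) := by ring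
      _ ≤ d * (chainWeight d (j + 1) * a j) := mul_le_mul_of_nonneg_left hratio (by positivity)
      _ = chainWeight d (j + 1) * (d * a j) := by ring
      _ < chainWeight d (j + 1) * (chainWeight d j * a 0) := this
      _ = chainWeight d j * (chainWeight d (j + 1) * a 0) := by ring

end Sequence

theorem iG_add_iG_le (E : Finset (Sym2 α)) (X Y : Finset α) :
    iG E X + iG E Y ≤ iG E (X ∪ Y) + iG E (X ∩ Y) := by
  have hinter : inducedEdges E X ∩ inducedEdges E Y = inducedEdges E (X ∩ Y) := by
    ext e
    simp only [inducedEdges, mem_inter, mem_filter]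
    exact ⟨fun ⟨⟨he, hX⟩, _, hY⟩ => ⟨he, fun v hv => ⟨hX v hv, hY v hv⟩⟩,
      fun ⟨he, h⟩ => ⟨⟨he, fun v hv => (h v hv).1⟩, he, fun v hv => (h v hv).2⟩⟩
  have hunion : inducedEdges E X ∪ inducedEdges E Y ⊆ inducedEdges E (X ∪ Y) :=
    union_subset (monotone_filter_right E fun _ _ h v hv => mem_union_left Y (h v hv))
      (monotone_filter_right E fun _ _ h v hv => mem_union_right X (h v hv))
  unfold iG
  rw [← card_union_add_card_inter, hinter]
  exact Nat.add_le_add_right (card_le_card hunion) _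

def IsTight (d : ℕ) (E : Finset (Sym2 α)) (X : Finset α) : Prop :=
  iG E X + (d + 1).choose 2 = d * X.card

structure IsMaximalTightFamily (d : ℕ) (V : Finset α) (E : Finset (Sym2 α))
    (𝒳 : Finset (Finset α)) : Prop where
  subset : ∀ X ∈ 𝒳, X ⊆ V
  le_card : ∀ X ∈ 𝒳, d ≤ X.card
  isTight : ∀ X ∈ 𝒳, IsTight d E X
  eq_of_subset : ∀ X ∈ 𝒳, ∀ Z ⊆ V, X ⊆ Z → IsTight d E Z → Z = X

set_option linter.unusedSectionVars false in
theorem CritSubgraph.eq_inducedEdges {d : ℕ} {V U : Finset α} {E F : Finset (Sym2 α)}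
    (hsp : Sparse d V E) (h : CritSubgraph d V E U F) (hU : d + 2 ≤ U.card) :
    F = inducedEdges E U ∧ IsTight d E U := by
  obtain ⟨⟨hUV, hFE, hFU⟩, hcrit⟩ := h
  have hFsub : F ⊆ inducedEdges E U := fun e he => mem_filter.2 ⟨hFE he, hFU e he⟩
  have hUsp := hsp U hUV (by omega)
  have hFle := card_le_card hFsub
  have hFcard : F.card + (d + 1).choose 2 = d * U.card := by
    rcases hcrit with ⟨hU2, hF1⟩ | ⟨-, h⟩
    · obtain rfl : d = 0 := by omega
      simp only [iG, zero_mul, Nat.choose_succ_self, add_zero, nonpos_iff_eq_zero] at hUsp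
      omega
    · exact h
  unfold iG at hUsp
  have hF : F = inducedEdges E U := eq_of_subset_of_card_le hFsub (by omega)
  exact ⟨hF, by rw [IsTight, iG, ← hF, hFcard]⟩

theorem isMaximalTightFamily_critCover {d : ℕ} {V : Finset α} {E : Finset (Sym2 α)}
    (hsp : Sparse d V E) (hbig : ∀ U F, CritComponent d V E U F → d + 2 ≤ U.card) :
    IsMaximalTightFamily d V E (critCover d V E) := by
  have hmem : ∀ X ∈ critCover d V E, X ⊆ V ∧ ∃ F, CritComponent d V E X F := by
    simp [critCover]
  refine ⟨fun X hX => (hmem X hX).1, fun X hX => ?_, fun X hX => ?_, fun X hX Z hZV hXZ hZ => ?_⟩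
    <;> obtain ⟨-, F, hF⟩ := hmem X hX
  · exact (Nat.le_add_right d 2).trans (hbig X F hF)
  · exact (hF.1.eq_inducedEdges hsp (hbig X F hF)).2
  · have hZcrit : CritSubgraph d V E Z (inducedEdges E Z) :=
      ⟨⟨hZV, filter_subset _ _, fun e he => (mem_filter.1 he).2⟩,
        Or.inr ⟨(hbig X F hF).trans (card_le_card hXZ), hZ⟩⟩
    have hFZ : F ⊆ inducedEdges E Z := by
      rw [(hF.1.eq_inducedEdges hsp (hbig X F hF)).1]
      exact monotone_filter_right E fun _ _ h v hv => hXZ (h v hv)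
    exact (hF.2 Z _ hZcrit hXZ hFZ).1.symm

theorem degX_pos_iff {𝒳 : Finset (Finset α)} {U : Finset α} :
    0 < degX 𝒳 U ↔ ∃ X ∈ 𝒳, U ⊆ X := by
  simp [degX, card_pos, filter_nonempty_iff]

theorem degX_anti {𝒳 : Finset (Finset α)} {U U' : Finset α} (h : U ⊆ U') :
    degX 𝒳 U' ≤ degX 𝒳 U :=
  card_le_card (monotone_filter_right 𝒳 fun _ _ hX => h.trans hX)

theorem degX_empty (𝒳 : Finset (Finset α)) : degX 𝒳 ∅ = 𝒳.card := by
  simp [degX]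

theorem sum_eq_card_filter_pos_add_sum_sub_one {β : Type*} (s : Finset β) (h : β → ℕ) :
    ∑ b ∈ s, h b = #{b ∈ s | 0 < h b} + ∑ b ∈ s, (h b - 1) := by
  rw [card_filter, ← sum_add_distrib]
  exact sum_congr rfl fun b _ => by split_ifs <;> omega

theorem sum_card_filter_subset_eq_sum_degX {β : Type*} (𝒳 : Finset (Finset α)) (W : Finset α)
    (s : Finset β) (g : β → Finset α) :
    ∑ X ∈ 𝒳 with W ⊆ X, #{b ∈ s | g b ⊆ X} = ∑ b ∈ s, degX 𝒳 (g b ∪ W) := by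
  have := sum_card_bipartiteAbove_eq_sum_card_bipartiteBelow (s := {X ∈ 𝒳 | W ⊆ X}) (t := s)
    (r := fun X b => g b ⊆ X)
  simp only [bipartiteAbove, bipartiteBelow, filter_filter] at this
  rw [this]
  refine sum_congr rfl fun b _ => ?_
  simp only [degX, union_subset_iff, and_comm]

/-- The union of the members of `𝒳` containing `W`. -/
def starUnion (V : Finset α) (𝒳 : Finset (Finset α)) (W : Finset α) : Finset α :=
  {v ∈ V | 0 < degX 𝒳 (insert v W)}

theorem sum_theta_eq_layerSum (V : Finset α) (𝒳 : Finset (Finset α)) (j : ℕ) :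
    ∑ U ∈ theta V 𝒳 j, ((degX 𝒳 U : ℤ) - 1) = layerSum V (fun U => degX 𝒳 U - 1) j := by
  have hsub : theta V 𝒳 j ⊆ V.powersetCard j := fun U hU => by
    simp only [theta, mem_filter, mem_powerset] at hU
    exact mem_powersetCard.2 ⟨hU.1, hU.2.1⟩
  rw [layerSum, ← sum_subset hsub, Nat.cast_sum]
  · refine sum_congr rfl fun U hU => ?_
    have : 2 ≤ degX 𝒳 U := (mem_filter.1 hU).2.2
    omega
  · intro U hU hUθ
    simp only [theta, mem_filter, mem_powerset, not_and, not_le] at hUθ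
    obtain ⟨hUV, hUj⟩ := mem_powersetCard.1 hU
    have := hUθ hUV hUj
    omega

namespace IsMaximalTightFamily

variable {d : ℕ} {V : Finset α} {E : Finset (Sym2 α)} {𝒳 : Finset (Finset α)}

theorem isTight_union (h𝒳 : IsMaximalTightFamily d V E 𝒳) (hsp : Sparse d V E)
    {X Y : Finset α} (hX : X ∈ 𝒳) (hY : Y ∈ 𝒳) (hXY : d ≤ (X ∩ Y).card) :
    IsTight d E (X ∪ Y) := by
  have hXV := h𝒳.subset X hX
  have hYV := h𝒳.subset Y hY
  have hinter := hsp (X ∩ Y) (inter_subset_left.trans hXV) hXY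
  have hunion := hsp (X ∪ Y) (union_subset hXV hYV)
    (hXY.trans (card_le_card (inter_subset_left.trans subset_union_left)))
  have hcard : d * (X ∪ Y).card + d * (X ∩ Y).card = d * X.card + d * Y.card := by
    rw [← mul_add, ← mul_add, card_union_add_card_inter]
  have := iG_add_iG_le E X Y
  have := h𝒳.isTight X hX
  have := h𝒳.isTight Y hY
  unfold IsTight at *
  omega

theorem degX_le_one (h𝒳 : IsMaximalTightFamily d V E 𝒳) (hsp : Sparse d V E) {U : Finset α}
    (hU : d ≤ U.card) : degX 𝒳 U ≤ 1 := by
  by_contra! h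
  obtain ⟨X, hX, Y, hY, hne⟩ := one_lt_card.1 h
  rw [mem_filter] at hX hY
  have hXY := h𝒳.isTight_union hsp hX.1 hY.1 (hU.trans (card_le_card (subset_inter hX.2 hY.2)))
  have hXV := h𝒳.subset X hX.1
  have hYV := h𝒳.subset Y hY.1
  have h1 := h𝒳.eq_of_subset X hX.1 _ (union_subset hXV hYV) subset_union_left hXY
  have h2 := h𝒳.eq_of_subset Y hY.1 _ (union_subset hXV hYV) subset_union_right hXY
  exact hne (h1.symm.trans h2)

theorem subset_starUnion (h𝒳 : IsMaximalTightFamily d V E 𝒳) {W X : Finset α} (hX : X ∈ 𝒳)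
    (hWX : W ⊆ X) : X ⊆ starUnion V 𝒳 W := fun _ hv =>
  mem_filter.2 ⟨h𝒳.subset X hX hv, degX_pos_iff.2 ⟨X, hX, insert_subset hv hWX⟩⟩

theorem mul_sum_degX_eq (h𝒳 : IsMaximalTightFamily d V E 𝒳) (W : Finset α) :
    d * ∑ v ∈ V, degX 𝒳 (insert v W) =
      degX 𝒳 W * (d + 1).choose 2 + ∑ e ∈ E, degX 𝒳 (e.toFinset ∪ W) := by
  have hvert : ∀ X ∈ 𝒳, #{v ∈ V | {v} ⊆ X} = X.card := fun X hX => by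
    simp only [singleton_subset_iff]
    rw [filter_mem_eq_inter, inter_eq_right.2 (h𝒳.subset X hX)]
  have hedge : ∀ X, #{e ∈ E | e.toFinset ⊆ X} = iG E X := fun X => by
    simp only [iG, inducedEdges, subset_iff, Sym2.mem_toFinset]
  calc d * ∑ v ∈ V, degX 𝒳 (insert v W)
      = ∑ X ∈ 𝒳 with W ⊆ X, d * X.card := by
        simp only [insert_eq]
        rw [← sum_card_filter_subset_eq_sum_degX, mul_sum]
        exact sum_congr rfl fun X hX => by rw [hvert X (mem_filter.1 hX).1]
    _ = ∑ X ∈ 𝒳 with W ⊆ X, (iG E X + (d + 1).choose 2) :=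
        sum_congr rfl fun X hX => (h𝒳.isTight X (mem_filter.1 hX).1).symm
    _ = degX 𝒳 W * (d + 1).choose 2 + ∑ e ∈ E, degX 𝒳 (e.toFinset ∪ W) := by
        rw [sum_add_distrib, sum_const, smul_eq_mul, ← sum_card_filter_subset_eq_sum_degX,
          add_comm, degX]
        simp only [hedge]

theorem mul_sum_degX_sub_one_add_le (h𝒳 : IsMaximalTightFamily d V E 𝒳) (W : Finset α)
    {s : ℕ}
    (hY : iG E (starUnion V 𝒳 W) + (d + 1).choose 2 + s ≤ d * (starUnion V 𝒳 W).card) :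
    d * ∑ v ∈ V, (degX 𝒳 (insert v W) - 1) + (d + 1).choose 2 + s ≤
      degX 𝒳 W * (d + 1).choose 2 + ∑ e ∈ E, (degX 𝒳 (e.toFinset ∪ W) - 1) := by
  have hid := h𝒳.mul_sum_degX_eq W
  rw [sum_eq_card_filter_pos_add_sum_sub_one V, sum_eq_card_filter_pos_add_sum_sub_one E,
    mul_add] at hid
  have hedges : #{e ∈ E | 0 < degX 𝒳 (e.toFinset ∪ W)} ≤ iG E (starUnion V 𝒳 W) := by
    refine card_le_card fun e he => ?_
    obtain ⟨heE, hpos⟩ := mem_filter.1 he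
    obtain ⟨X, hX, heX⟩ := degX_pos_iff.1 hpos
    exact mem_filter.2 ⟨heE, fun v hv => h𝒳.subset_starUnion hX (union_subset_right heX)
      (union_subset_left heX (Sym2.mem_toFinset.2 hv))⟩
  change d * #(starUnion V 𝒳 W) + _ = _ at hid
  omega

theorem mul_sum_degX_sub_one_le (h𝒳 : IsMaximalTightFamily d V E 𝒳) (hsp : Sparse d V E)
    (W : Finset α) :
    d * ∑ v ∈ V, (degX 𝒳 (insert v W) - 1) ≤
      (d + 1).choose 2 * (degX 𝒳 W - 1) + ∑ e ∈ E, (degX 𝒳 (e.toFinset ∪ W) - 1) := by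
  rcases Nat.eq_zero_or_pos (degX 𝒳 W) with hW | hW
  · have hzero : ∀ v ∈ V, degX 𝒳 (insert v W) - 1 = 0 := fun v _ => by
      have := degX_anti (𝒳 := 𝒳) (subset_insert v W)
      omega
    rw [sum_eq_zero hzero]
    exact Nat.zero_le _
  obtain ⟨X, hX, hWX⟩ := degX_pos_iff.1 hW
  have hXY := h𝒳.subset_starUnion hX hWX
  have := h𝒳.mul_sum_degX_sub_one_add_le W (s := 0)
    (hsp _ (filter_subset _ _) ((h𝒳.le_card X hX).trans (card_le_card hXY)))
  obtain ⟨m, hm⟩ : ∃ m, degX 𝒳 W = m + 1 := ⟨degX 𝒳 W - 1, by omega⟩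
  rw [hm, add_mul, one_mul] at this
  rw [hm, Nat.add_sub_cancel, mul_comm ((d + 1).choose 2)]
  omega

theorem mul_sum_degX_sub_one_lt (h𝒳 : IsMaximalTightFamily d V E 𝒳) (hsp : Sparse d V E)
    (h𝒳2 : 2 ≤ 𝒳.card) :
    d * ∑ v ∈ V, (degX 𝒳 {v} - 1) <
      (d + 1).choose 2 * (𝒳.card - 1) + ∑ e ∈ E, (degX 𝒳 e.toFinset - 1) := by
  obtain ⟨X, hX, Y, hY, hXY⟩ := one_lt_card.1 h𝒳2
  set Z := starUnion V 𝒳 ∅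
  have hZV : Z ⊆ V := filter_subset _ _
  have hXZ := h𝒳.subset_starUnion hX (empty_subset X)
  have hYZ := h𝒳.subset_starUnion hY (empty_subset Y)
  have hZ : iG E Z + (d + 1).choose 2 + 1 ≤ d * Z.card := by
    have hle := hsp Z hZV ((h𝒳.le_card X hX).trans (card_le_card hXZ))
    have hne : ¬ IsTight d E Z := fun hZ =>
      hXY ((h𝒳.eq_of_subset X hX Z hZV hXZ hZ).symm.trans (h𝒳.eq_of_subset Y hY Z hZV hYZ hZ))
    unfold IsTight at hne
    omega
  have := h𝒳.mul_sum_degX_sub_one_add_le ∅ hZ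
  simp only [insert_empty, union_empty, degX_empty] at this
  obtain ⟨m, hm⟩ : ∃ m, 𝒳.card = m + 1 := ⟨𝒳.card - 1, by omega⟩
  rw [hm, add_mul, one_mul] at this
  rw [hm, Nat.add_sub_cancel, mul_comm ((d + 1).choose 2)]
  omega

theorem layerSum_eq_zero (h𝒳 : IsMaximalTightFamily d V E 𝒳) (hsp : Sparse d V E) {j : ℕ}
    (hj : d ≤ j) : layerSum V (fun U => degX 𝒳 U - 1) j = 0 :=
  sum_eq_zero fun U hU => by
    have := h𝒳.degX_le_one hsp (hj.trans (mem_powersetCard.1 hU).2.ge)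
    omega

theorem mul_layerSum_lt (h𝒳 : IsMaximalTightFamily d V E 𝒳) (hval : ValidOn V E)
    (hsp : Sparse d V E) (h𝒳2 : 2 ≤ 𝒳.card) {j : ℕ} (hj : 1 ≤ j) (hjd : j < d) :
    d * ((layerSum V (fun U => degX 𝒳 U - 1) j : ℕ) : ℤ) < chainWeight d j * (𝒳.card - 1) := by
  set f : Finset α → ℕ := fun U => degX 𝒳 U - 1
  have htop : ((layerSum V f d : ℕ) : ℤ) = 0 := by simp [f, h𝒳.layerSum_eq_zero hsp le_rfl]
  have hI : ∀ i, 1 ≤ i → i + 2 ≤ d →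
      2 * (i + 1) * ((d : ℤ) - i) * ((layerSum V f (i + 1) : ℕ) : ℤ) ≤
        ((d : ℤ) - i) * ((d : ℤ) - i + 1) * ((layerSum V f i : ℕ) : ℤ) +
          (i + 1) * (i + 2) * ((layerSum V f (i + 2) : ℕ) : ℤ) := fun i _ _ => by
    simpa using hval.mul_layerSum_succ_add_le f (d := d) (j := i) (s := 0)
      fun W _ => by simpa using h𝒳.mul_sum_degX_sub_one_le hsp W
  have h0 := hval.mul_layerSum_succ_add_le f (d := d) (j := 0) (s := 1) fun W hW => by
    obtain rfl : W = ∅ := by simpa using hW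
    have := h𝒳.mul_sum_degX_sub_one_lt hsp h𝒳2
    simp only [f, insert_empty, union_empty, degX_empty]
    omega
  have hb0 : ((layerSum V f 0 : ℕ) : ℤ) = 𝒳.card - 1 := by
    simp [f, layerSum, degX_empty, Nat.cast_sub (show 1 ≤ 𝒳.card by omega)]
  rw [← hb0]
  exact mul_lt_chainWeight_mul (a := fun i => ((layerSum V f i : ℕ) : ℤ)) htop hI
    (by simp at h0; linarith) hj hjd

end IsMaximalTightFamily

/-- Lemma 3.3(c) of the paper. -/
theorem stmt8 (d k : ℕ) (hd : 2 ≤ d) (hk : k ≤ d - 2)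
    (V : Finset α) (E : Finset (Sym2 α)) (hval : ValidOn V E) (hsp : Sparse d V E)
    (𝒳 : Finset (Finset α)) (h𝒳 : 𝒳 = critCover d V E) (h𝒳2 : 2 ≤ 𝒳.card)
    (hbig : ∀ U F, CritComponent d V E U F → d + 2 ≤ U.card)
    (a : ℕ → ℤ) (ha : ∀ j ≤ d, a j = ∑ U ∈ theta V 𝒳 j, ((degX 𝒳 U : ℤ) - 1)) :
    (d : ℤ) * ((d : ℤ) - k) * a (k + 1) <
      ((k : ℤ) + 2) * ((d : ℤ) - k - 1) * (Nat.choose (d + 1) (k + 2) : ℤ) *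
        ((𝒳.card : ℤ) - 1) := by
  have h𝒳max : IsMaximalTightFamily d V E 𝒳 := h𝒳 ▸ isMaximalTightFamily_critCover hsp hbig
  have hmain := h𝒳max.mul_layerSum_lt hval hsp h𝒳2 (j := k + 1) (by omega) (by omega)
  rw [ha (k + 1) (by omega), sum_theta_eq_layerSum, ← sub_mul_chainWeight_succ (by omega)]
  have := mul_lt_mul_of_pos_left hmain (show (0 : ℤ) < d - k by omega)
  linarith
end
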